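/- Let G be a digraph, s, t vertices with dist_G(s,t) < ∞, and let P be a simple directed s-to-t path with length(P) > dist_G(s,t). Let p be the smallest natural number such that at least two distinct vertices u of P satisfy dist_G(s,u) = p, and let x be the first vertex of P with dist_G(s,x) = p. Then every vertex w of P occurring at x or later along P satisfies dist_G(s,w) ≥ p. -/

import Mathlib

/-! Distances from `s` grow by at most one along an arc, so along `P` from `s` (layer `0`) to `x`
(layer `p`) every layer `m ≤ p` is met before or at `x`. A vertex `w` at or after `x` in a layer
`m < p` would therefore share its layer with a distinct earlier vertex of the simple path `P`,
contradicting the minimality of `p`. -/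

variable {V : Type*}

/-- `w` is a directed walk from `u` to `v` in the digraph with arc relation `A`:
a nonempty list of vertices whose consecutive members are joined by arcs,
starting at `u` and ending at `v`. -/
def IsDiWalk (A : V → V → Prop) (u v : V) (w : List V) : Prop :=
  w.Chain' A ∧ w.head? = some u ∧ w.getLast? = some v

/-- The length (number of arcs) of a walk represented as its list of vertices. -/
def walkLength (w : List V) : ℕ :=
  w.length - 1

/-- `w` is a simple directed path from `u` to `v`. -/
def IsDiPath (A : V → V → Prop) (u v : V) (w : List V) : Prop :=
  IsDiWalk A u v w ∧ w.Nodup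

/-- Directed distance from `u` to `v`: the minimum length of a directed
`u`-to-`v` walk, or `⊤` if `v` is unreachable from `u`. -/
noncomputable def ddist (A : V → V → Prop) (u v : V) : ℕ∞ :=
  ⨅ (w : List V) (_ : IsDiWalk A u v w), (walkLength w : ℕ∞)

/-- The internal (non-endpoint) vertices of a path represented as a list. -/
def internalVerts (w : List V) : List V :=
  w.tail.dropLast

/-- Two paths are internally vertex-disjoint if no internal vertex of either
lies on the other. -/
def InternallyDisjoint (w₁ w₂ : List V) : Prop :=
  (∀ a ∈ internalVerts w₁, a ∉ w₂) ∧ (∀ a ∈ internalVerts w₂, a ∉ w₁)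

/-- All vertices of `w` lie in the induced subgraph `G_{≥p}` (with respect to
source `s`), i.e. have distance at least `p` from `s`. A path satisfying
`IsDiPath A x y w` together with `InGeq A s p w` is exactly a path of the
induced subgraph of `G` on `{v : dist_G(s,v) ≥ p}`. -/
def InGeq (A : V → V → Prop) (s : V) (p : ℕ) (w : List V) : Prop :=
  ∀ a ∈ w, (p : ℕ∞) ≤ ddist A s a

theorem List.IsChain.exists_mem_eq_of_le_add_one {α : Type*} {R : α → α → Prop} {f : α → ℕ∞}
    (hf : ∀ a b, R a b → f b ≤ f a + 1) {l : List α} (hl : l.IsChain R) {a b : α}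
    (ha : l.head? = some a) (hb : l.getLast? = some b) {m : ℕ∞} (ham : f a ≤ m) (hmb : m ≤ f b) :
    ∃ y ∈ l, f y = m := by
  induction l generalizing a with
  | nil => simp at ha
  | cons c l ih =>
    obtain rfl : c = a := by simpa using ha
    rcases ham.eq_or_lt with hfa | hfa
    · exact ⟨c, List.mem_cons_self, hfa⟩
    cases l with
    | nil =>
      obtain rfl : c = b := by simpa using hb
      exact (hfa.not_ge hmb).elim
    | cons d l =>
      obtain ⟨hcd, hl⟩ := List.isChain_cons_cons.1 hl
      have hfd : f d ≤ m := (hf c d hcd).trans (Order.add_one_le_of_lt hfa)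
      obtain ⟨y, hy, hfy⟩ := ih hl rfl (by simpa [List.getLast?_cons_cons] using hb) hfd
      exact ⟨y, List.mem_cons_of_mem c hy, hfy⟩

section

variable {A : V → V → Prop}

theorem IsDiWalk.ne_nil {u v : V} {w : List V} (hw : IsDiWalk A u v w) : w ≠ [] := by
  rintro rfl
  simp [IsDiWalk] at hw

theorem IsDiWalk.concat {u v v' : V} {w : List V} (hw : IsDiWalk A u v w) (hvv' : A v v') :
    IsDiWalk A u v' (w ++ [v']) := by
  have hne := hw.ne_nil
  obtain ⟨hc, hu, hv⟩ := hw
  refine ⟨List.isChain_append.2 ⟨hc, List.isChain_singleton v', ?_⟩, ?_, by simp⟩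
  · simp_all
  · rwa [List.head?_append_of_ne_nil _ hne]

theorem walkLength_concat {w : List V} (hw : w ≠ []) (v : V) :
    walkLength (w ++ [v]) = walkLength w + 1 := by
  have := List.length_pos_iff.2 hw
  simp only [walkLength, List.length_append, List.length_singleton]
  omega

theorem ddist_le_walkLength {u v : V} {w : List V} (hw : IsDiWalk A u v w) :
    ddist A u v ≤ walkLength w :=
  iInf₂_le (f := fun w (_ : IsDiWalk A u v w) => (walkLength w : ℕ∞)) w hw

theorem ddist_self (s : V) : ddist A s s = 0 :=
  nonpos_iff_eq_zero.1 <| ddist_le_walkLength (w := [s]) ⟨List.isChain_singleton s, rfl, rfl⟩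

theorem ddist_le_ddist_add_one (s : V) {u v : V} (huv : A u v) :
    ddist A s v ≤ ddist A s u + 1 := by
  conv_rhs => rw [ddist, ENat.iInf₂_add]
  refine le_iInf₂ fun w hw => ?_
  calc ddist A s v ≤ walkLength (w ++ [v]) := ddist_le_walkLength (hw.concat huv)
    _ = walkLength w + 1 := by rw [walkLength_concat hw.ne_nil]; push_cast; rfl

end

theorem stmt5_general [DecidableEq V] (A : V → V → Prop) (s t : V)
    (P : List V) (hP : IsDiPath A s t P)
    (p : ℕ)
    (hpmin : ∀ q : ℕ, q < p →
      ¬ ∃ u ∈ P, ∃ v ∈ P, u ≠ v ∧ ddist A s u = (q : ℕ∞) ∧ ddist A s v = (q : ℕ∞))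
    (x : V) (hxp : ddist A s x = (p : ℕ∞)) :
    ∀ w ∈ P.drop (P.idxOf x), (p : ℕ∞) ≤ ddist A s w := by
  obtain ⟨⟨hchain, hs, -⟩, hnodup⟩ := hP
  intro w hw
  by_contra! hwp
  obtain ⟨m, hm⟩ := ENat.ne_top_iff_exists.1 (hwp.trans_le le_top).ne
  set i := P.idxOf x
  have hi : i < P.length := by
    by_contra! h
    simp [List.drop_eq_nil_iff.2 h] at hw
  have hx : P[i] = x := List.getElem_idxOf hi
  have hprefix : P.take i ++ [x] = P.take (i + 1) := hx ▸ List.take_concat_get' P i hi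
  obtain ⟨y, hy, hdy⟩ := (hchain.take (i + 1)).exists_mem_eq_of_le_add_one (f := ddist A s)
    (a := s) (b := x) (m := ddist A s w) (fun _ _ => ddist_le_ddist_add_one s)
    (by simpa [List.head?_take] using hs) (by simp [← hprefix])
    (by simp [ddist_self]) (hxp ▸ hwp.le)
  rw [← hprefix, List.mem_append, List.mem_singleton] at hy
  have hyx : y ≠ x := by
    rintro rfl
    exact hwp.ne (hdy.symm.trans hxp)
  replace hy : y ∈ P.take i := hy.resolve_right hyx
  have hyw : y ≠ w := by
    rintro rfl
    exact List.disjoint_take_drop hnodup le_rfl hy hw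
  exact hpmin m (by exact_mod_cast hm ▸ hwp)
    ⟨y, List.mem_of_mem_take hy, w, List.mem_of_mem_drop hw, hyw, hdy.trans hm.symm, hm.symm⟩

/-- for a non-shortest simple `s`-to-`t` path `P`, with `p` the
smallest index of a BFS layer containing at least two vertices of `P` and `x`
the first vertex of `P` in layer `p`, every vertex of `P` occurring at `x` or
later along `P` has distance at least `p` from `s`. -/
theorem stmt5 [DecidableEq V] (A : V → V → Prop) (s t : V)
    (hfin : ddist A s t < ⊤) (P : List V) (hP : IsDiPath A s t P)
    (hlong : ddist A s t < (walkLength P : ℕ∞))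
    (p : ℕ)
    (hp : ∃ u ∈ P, ∃ v ∈ P, u ≠ v ∧ ddist A s u = (p : ℕ∞) ∧ ddist A s v = (p : ℕ∞))
    (hpmin : ∀ q : ℕ, q < p →
      ¬ ∃ u ∈ P, ∃ v ∈ P, u ≠ v ∧ ddist A s u = (q : ℕ∞) ∧ ddist A s v = (q : ℕ∞))
    (x : V) (hxP : x ∈ P) (hxp : ddist A s x = (p : ℕ∞))
    (hxfirst : ∀ z ∈ P.take (P.idxOf x), ddist A s z ≠ (p : ℕ∞)) :
    ∀ w ∈ P.drop (P.idxOf x), (p : ℕ∞) ≤ ddist A s w :=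
  stmt5_general A s t P hP p hpmin x hxp
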